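/- Let a, c > 0 and b ∈ ℝ, and set β := b/√(ac). For all n, m ∈ ℕ, the polynomial u_{n,m} satisfies the eigenvalue equation 𝔇' u_{n,m} = (m + n) · u_{n,m}, where 𝔇' = x∂x + y∂y − 2β ∂x∂y. -/
import Mathlib


open MvPolynomial Finset

/-- The polynomial
`u_{n,m} = Σ_{k=0}^{min(n,m)} (−1)^k k! C(n,k) C(m,k) a^{(n−k)/2} b^k c^{(m−k)/2} x^{m−k} y^{n−k}`
in the variables `x = X 0`, `y = X 1`, where the powers of `a` and `c` are real powers. -/
noncomputable def uPoly (a b c : ℝ) (n m : ℕ) : MvPolynomial (Fin 2) ℝ :=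
  ∑ k ∈ range (min n m + 1),
    C ((-1 : ℝ) ^ k * (k.factorial : ℝ) * (n.choose k : ℝ) * (m.choose k : ℝ) *
        a ^ (((n - k : ℕ) : ℝ) / 2) * b ^ k * c ^ (((m - k : ℕ) : ℝ) / 2)) *
      X 0 ^ (m - k) * X 1 ^ (n - k)

/-- The coefficient of the `k`-th term of `uPoly`. -/
noncomputable def uCoef (a b c : ℝ) (n m k : ℕ) : ℝ :=
  (-1 : ℝ) ^ k * (k.factorial : ℝ) * (n.choose k : ℝ) * (m.choose k : ℝ) *
    a ^ (((n - k : ℕ) : ℝ) / 2) * b ^ k * c ^ (((m - k : ℕ) : ℝ) / 2)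

lemma uPoly_eq (a b c : ℝ) (n m : ℕ) : uPoly a b c n m =
    ∑ k ∈ range (min n m + 1), C (uCoef a b c n m k) * X 0 ^ (m - k) * X 1 ^ (n - k) := rfl

lemma uCoef_rec (a b c β : ℝ) (ha : 0 < a) (hc : 0 < c)
    (hβ : β = b / Real.sqrt (a * c)) (n m i : ℕ) (hin : i + 1 ≤ n) (him : i + 1 ≤ m) :
    2 * β * uCoef a b c n m i * ((m - i : ℕ) : ℝ) * ((n - i : ℕ) : ℝ)
      = -(2 * ((i : ℝ) + 1) * uCoef a b c n m (i + 1)) := by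
  have hsa : (0:ℝ) < Real.sqrt a := Real.sqrt_pos.mpr ha
  have hsc : (0:ℝ) < Real.sqrt c := Real.sqrt_pos.mpr hc
  have h4 : a ^ (((n - (i+1) : ℕ) : ℝ) / 2) * Real.sqrt a = a ^ (((n - i : ℕ) : ℝ) / 2) := by
    rw [Real.sqrt_eq_rpow, ← Real.rpow_add ha]
    congr 1
    have h : (n - (i+1) : ℕ) + 1 = n - i := by omega
    have := congrArg (Nat.cast (R := ℝ)) h
    push_cast at this
    linarith
  have h5 : c ^ (((m - (i+1) : ℕ) : ℝ) / 2) * Real.sqrt c = c ^ (((m - i : ℕ) : ℝ) / 2) := by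
    rw [Real.sqrt_eq_rpow, ← Real.rpow_add hc]
    congr 1
    have h : (m - (i+1) : ℕ) + 1 = m - i := by omega
    have := congrArg (Nat.cast (R := ℝ)) h
    push_cast at this
    linarith
  have h12 : ((n.choose (i+1) : ℝ)) * ((i:ℝ)+1) * (((m.choose (i+1) : ℝ)) * ((i:ℝ)+1))
      = (n.choose i : ℝ) * ((n - i : ℕ) : ℝ) * ((m.choose i : ℝ) * ((m - i : ℕ) : ℝ)) := by
    have h1 : ((n.choose (i+1) : ℝ)) * ((i:ℝ)+1) = (n.choose i : ℝ) * ((n - i : ℕ) : ℝ) := by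
      exact_mod_cast congrArg (Nat.cast (R := ℝ)) (Nat.choose_succ_right_eq n i)
    have h2 : ((m.choose (i+1) : ℝ)) * ((i:ℝ)+1) = (m.choose i : ℝ) * ((m - i : ℕ) : ℝ) := by
      exact_mod_cast congrArg (Nat.cast (R := ℝ)) (Nat.choose_succ_right_eq m i)
    rw [h1, h2]
  have hb' : b = β * (Real.sqrt a * Real.sqrt c) := by
    rw [hβ, Real.sqrt_mul ha.le]
    field_simp
  unfold uCoef
  rw [← h4, ← h5, hb']
  have h3 : ((i+1).factorial : ℝ) = ((i:ℝ)+1) * (i.factorial : ℝ) := by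
    push_cast [Nat.factorial_succ]; ring
  rw [h3]
  push_cast
  linear_combination (-(2*(-1:ℝ)^i*(i.factorial:ℝ) * a ^ (((n - (i+1) : ℕ) : ℝ) / 2)
    * c ^ (((m - (i+1) : ℕ) : ℝ) / 2) * (β*(Real.sqrt a*Real.sqrt c))^i * β * Real.sqrt a
    * Real.sqrt c)) * h12

lemma dterm0 (r : ℝ) (p q : ℕ) :
    pderiv 0 (C r * X 0 ^ p * X 1 ^ q : MvPolynomial (Fin 2) ℝ)
      = C (r * p) * X 0 ^ (p - 1) * X 1 ^ q := by
  simp only [pderiv_mul, pderiv_C_mul, pderiv_pow, pderiv_X_self, pderiv_C,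
    pderiv_X_of_ne (show (1:Fin 2) ≠ 0 by decide), mul_zero, zero_mul, add_zero, zero_add,
    mul_one, map_mul, map_natCast]
  ring

lemma dterm1 (r : ℝ) (p q : ℕ) :
    pderiv 1 (C r * X 0 ^ p * X 1 ^ q : MvPolynomial (Fin 2) ℝ)
      = C (r * q) * X 0 ^ p * X 1 ^ (q - 1) := by
  simp only [pderiv_mul, pderiv_C_mul, pderiv_pow, pderiv_X_self, pderiv_C,
    pderiv_X_of_ne (show (0:Fin 2) ≠ 1 by decide), mul_zero, zero_mul, zero_add, add_zero,
    mul_one, map_mul, map_natCast]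
  ring

lemma xmul0 (r : ℝ) (p q : ℕ) :
    X 0 * (C (r * p) * X 0 ^ (p - 1) * X 1 ^ q : MvPolynomial (Fin 2) ℝ)
      = C (r * p) * X 0 ^ p * X 1 ^ q := by
  cases p with
  | zero => simp
  | succ p => simp only [Nat.add_sub_cancel, pow_succ]; ring

lemma xmul1 (r : ℝ) (p q : ℕ) :
    X 1 * (C (r * q) * X 0 ^ p * X 1 ^ (q - 1) : MvPolynomial (Fin 2) ℝ)
      = C (r * q) * X 0 ^ p * X 1 ^ q := by
  cases q with
  | zero => simp
  | succ q => simp only [Nat.add_sub_cancel, pow_succ]; ring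

/-- The polynomials `u_{n,m}` satisfy the eigenvalue equation `𝔇' u = (m+n)·u` for
`𝔇' = x∂x + y∂y − 2β ∂x∂y`, where `β = b/√(ac)`. -/
theorem uPoly_eigen (a b c β : ℝ) (ha : 0 < a) (hc : 0 < c)
    (hβ : β = b / Real.sqrt (a * c)) (n m : ℕ) :
    X 0 * pderiv 0 (uPoly a b c n m) + X 1 * pderiv 1 (uPoly a b c n m) -
        C (2 * β) * pderiv 0 (pderiv 1 (uPoly a b c n m)) =
      C ((m + n : ℕ) : ℝ) * uPoly a b c n m := by
  set N := min n m with hN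
  have e1 : X 0 * pderiv 0 (uPoly a b c n m)
      = ∑ k ∈ range (N + 1), C (uCoef a b c n m k * ((m - k : ℕ) : ℝ)) * X 0 ^ (m - k) * X 1 ^ (n - k) := by
    rw [uPoly_eq, map_sum, Finset.mul_sum]
    exact Finset.sum_congr rfl fun k _ => by rw [dterm0, xmul0]
  have e2 : X 1 * pderiv 1 (uPoly a b c n m)
      = ∑ k ∈ range (N + 1), C (uCoef a b c n m k * ((n - k : ℕ) : ℝ)) * X 0 ^ (m - k) * X 1 ^ (n - k) := by
    rw [uPoly_eq, map_sum, Finset.mul_sum]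
    exact Finset.sum_congr rfl fun k _ => by rw [dterm1, xmul1]
  have e3 : C (2 * β) * pderiv 0 (pderiv 1 (uPoly a b c n m))
      = ∑ k ∈ range (N + 1),
          C (2 * β * uCoef a b c n m k * ((m - k : ℕ) : ℝ) * ((n - k : ℕ) : ℝ)) *
            X 0 ^ (m - k - 1) * X 1 ^ (n - k - 1) := by
    rw [uPoly_eq, map_sum, map_sum, Finset.mul_sum]
    refine Finset.sum_congr rfl fun k _ => ?_
    rw [dterm1, dterm0, ← mul_assoc, ← mul_assoc, ← C_mul]
    ring_nf
  have e4 : C ((m + n : ℕ) : ℝ) * uPoly a b c n m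
      = ∑ k ∈ range (N + 1),
          C (uCoef a b c n m k * (((m : ℝ) + n))) * X 0 ^ (m - k) * X 1 ^ (n - k) := by
    rw [uPoly_eq, Finset.mul_sum]
    refine Finset.sum_congr rfl fun k _ => ?_
    rw [← mul_assoc, ← mul_assoc, ← C_mul]
    push_cast
    ring_nf
  have h14 : (∑ k ∈ range (N + 1),
        C (uCoef a b c n m k * (((m : ℝ) + n))) * X 0 ^ (m - k) * X 1 ^ (n - k) : MvPolynomial (Fin 2) ℝ)
      - (∑ k ∈ range (N + 1), C (uCoef a b c n m k * ((m - k : ℕ) : ℝ)) * X 0 ^ (m - k) * X 1 ^ (n - k))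
      - (∑ k ∈ range (N + 1), C (uCoef a b c n m k * ((n - k : ℕ) : ℝ)) * X 0 ^ (m - k) * X 1 ^ (n - k))
      = ∑ k ∈ range (N + 1), C (2 * k * uCoef a b c n m k) * X 0 ^ (m - k) * X 1 ^ (n - k) := by
    rw [← Finset.sum_sub_distrib, ← Finset.sum_sub_distrib]
    refine Finset.sum_congr rfl fun k hk => ?_
    have hk' : k ≤ N := Nat.lt_succ_iff.mp (Finset.mem_range.mp hk)
    have hkm : k ≤ m := le_trans hk' (min_le_right n m)
    have hkn : k ≤ n := le_trans hk' (min_le_left n m)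
    have : (2 * (k:ℝ) * uCoef a b c n m k)
        = uCoef a b c n m k * ((m : ℝ) + n) - uCoef a b c n m k * ((m - k : ℕ) : ℝ)
          - uCoef a b c n m k * ((n - k : ℕ) : ℝ) := by
      rw [Nat.cast_sub hkm, Nat.cast_sub hkn]; ring
    rw [this, map_sub, map_sub]
    ring
  have h3 : (∑ k ∈ range (N + 1),
        C (2 * β * uCoef a b c n m k * ((m - k : ℕ) : ℝ) * ((n - k : ℕ) : ℝ)) *
          X 0 ^ (m - k - 1) * X 1 ^ (n - k - 1) : MvPolynomial (Fin 2) ℝ)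
      = -∑ k ∈ range (N + 1), C (2 * k * uCoef a b c n m k) * X 0 ^ (m - k) * X 1 ^ (n - k) := by
    rw [Finset.sum_range_succ, Finset.sum_range_succ']
    have hlast : 2 * β * uCoef a b c n m N * ((m - N : ℕ) : ℝ) * ((n - N : ℕ) : ℝ) = 0 := by
      have h : m - N = 0 ∨ n - N = 0 := by omega
      rcases h with h | h <;> simp [h]
    have hfirst : 2 * ((0:ℕ):ℝ) * uCoef a b c n m 0 = 0 := by simp
    rw [hlast, hfirst, map_zero, zero_mul, zero_mul, zero_mul, zero_mul, add_zero, add_zero]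
    rw [← Finset.sum_neg_distrib]
    refine Finset.sum_congr rfl fun i hi => ?_
    have hi' : i < N := Finset.mem_range.mp hi
    have hin : i + 1 ≤ n := by omega
    have him : i + 1 ≤ m := by omega
    have key := uCoef_rec a b c β ha hc hβ n m i hin him
    have hexp0 : m - (i + 1) = m - i - 1 := by omega
    have hexp1 : n - (i + 1) = n - i - 1 := by omega
    rw [key]
    push_cast
    rw [hexp0, hexp1]
    simp only [map_neg]
    ring
  rw [e1, e2, e3, e4, h3, ← h14]
  ring
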